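/- arXiv:2403.06368 — 3 statements merged into one kernel-verified Lean document; each statement's English description precedes it below -/
import Mathlib

section
/- Suppose E[H^s | X, R] = E[H^o | X, R] + g(X, R) + R·λ where g(X, R) = (1-R)·g0(X) + R·g1(X) and the one-sided limits of g0 from the left and g1 from the right at x* are equal. Then the 'difference-in-differences' quantity {lim_{δ→0} E[H^s | X=x*+δ, R=1] − lim_{δ→0} E[H^s | X=x*-δ, R=0]} − {lim_{δ→0} E[H^o | X=x*+δ, R=1] − lim_{δ→0} E[H^o | X=x*-δ, R=0]} equals λ, provided the one-sided limits of E[H^o | X, R] at x* (from the right with R=1 and from the left with R=0) exist. -/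
open Filter Topology

section OneSided

variable {α β : Type*} [TopologicalSpace α] [Preorder α] {a : α} [∀ x, Decidable (a < x)]
  {f g : α → β} {l : Filter β}

theorem tendsto_ite_nhdsGT_of_tendsto (h : Tendsto f (𝓝[>] a) l) :
    Tendsto (fun x => if a < x then f x else g x) (𝓝[>] a) l :=
  tendsto_nhdsWithin_congr (fun _ hx => (if_pos hx).symm) h

theorem tendsto_ite_nhdsLT_of_tendsto (h : Tendsto g (𝓝[<] a) l) :
    Tendsto (fun x => if a < x then f x else g x) (𝓝[<] a) l :=
  tendsto_nhdsWithin_congr (fun _ hx => (if_neg (lt_asymm hx)).symm) h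

end OneSided

/-- Proposition 2: With `E[H^s | X=x, R] = E[H^o | X=x, R] + g(x,R) + R·λ`,
`g(x,R) = (1-R)·g0(x) + R·g1(x)`, `R = 1{x > x*}`, equal one-sided limits of `g0` (left) and `g1`
(right) at `x*`, and existing one-sided limits of `E[H^o | X, R]` at `x*`, the
difference-in-differences quantity — the jump in subjective health minus the jump in objective
health at `x*` — equals `λ`. -/
theorem justification_bias_identified_by_did
    (g0 g1 EHo EHs : ℝ → ℝ) (xstar Lg lam Ao Bo : ℝ)
    (hg0 : Tendsto g0 (𝓝[<] xstar) (𝓝 Lg))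
    (hg1 : Tendsto g1 (𝓝[>] xstar) (𝓝 Lg))
    (hAo : Tendsto EHo (𝓝[>] xstar) (𝓝 Ao))
    (hBo : Tendsto EHo (𝓝[<] xstar) (𝓝 Bo))
    (hEHs : ∀ x, EHs x = EHo x + (if xstar < x then g1 x + lam else g0 x)) :
    ∃ As Bs : ℝ,
      Tendsto EHs (𝓝[>] xstar) (𝓝 As) ∧
      Tendsto EHs (𝓝[<] xstar) (𝓝 Bs) ∧
      (As - Bs) - (Ao - Bo) = lam := by
  obtain rfl : EHs = fun x => EHo x + (if xstar < x then g1 x + lam else g0 x) := funext hEHs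
  exact ⟨Ao + (Lg + lam), Bo + Lg,
    hAo.add (tendsto_ite_nhdsGT_of_tendsto (hg1.add_const lam)),
    hBo.add (tendsto_ite_nhdsLT_of_tendsto hg0), by ring⟩
end

section
/- In the three-type mixture model around the statutory retirement age m*, the discontinuity of the population conditional expectation of reported health at m* equals λ·P^C, where P^C is the probability mass of compliers. Consequently, if P^C > 0, then λ equals the discontinuity divided by P^C. -/
open Filter Topology

section OneSidedLimits

variable {α β : Type*} [LinearOrder α] [TopologicalSpace α] [TopologicalSpace β]
  {f g : α → β} {a : α}

theorem ContinuousAt.tendsto_ite_lt_nhdsGT (hf : ContinuousAt f a) :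
    Tendsto (fun x => if a < x then f x else g x) (𝓝[>] a) (𝓝 (f a)) :=
  (hf.continuousWithinAt (s := Set.Ioi a)).congr' <| by
    filter_upwards [self_mem_nhdsWithin] with x hx
    exact (if_pos (Set.mem_Ioi.mp hx)).symm

theorem ContinuousAt.tendsto_ite_lt_nhdsLT (hg : ContinuousAt g a) :
    Tendsto (fun x => if a < x then f x else g x) (𝓝[<] a) (𝓝 (g a)) :=
  (hg.continuousWithinAt (s := Set.Iio a)).congr' <| by
    filter_upwards [self_mem_nhdsWithin] with x hx
    exact (if_neg (not_lt.mpr hx.le)).symm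

end OneSidedLimits

theorem justification_bias_statutory_age_mixture_general
    (f0 f1 : ℝ → ℝ) (mstar L lam PN PA PC : ℝ)
    (hc0 : ContinuousAt f0 mstar) (hc1 : ContinuousAt f1 mstar)
    (h0 : f0 mstar = L) (h1 : f1 mstar = L)
    (EHs : ℝ → ℝ)
    (hEHs : ∀ x, EHs x =
      PN * f0 x + PA * (f1 x + lam) +
        PC * (if mstar < x then f1 x + lam else f0 x)) :
    ∃ A B : ℝ,
      Tendsto EHs (𝓝[>] mstar) (𝓝 A) ∧
      Tendsto EHs (𝓝[<] mstar) (𝓝 B) ∧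
      A - B = lam * PC ∧
      (0 < PC → lam = (A - B) / PC) := by
  set right := fun x => PN * f0 x + PA * (f1 x + lam) + PC * (f1 x + lam)
  set left := fun x => PN * f0 x + PA * (f1 x + lam) + PC * f0 x
  have hEHs_ite : EHs = fun x => if mstar < x then right x else left x := by
    funext x
    rw [hEHs x]
    split_ifs <;> rfl
  have hright : ContinuousAt right mstar := by fun_prop
  have hleft : ContinuousAt left mstar := by fun_prop
  have hjump : right mstar - left mstar = lam * PC := by
    simp only [right, left, h0, h1]
    ring
  refine ⟨right mstar, left mstar, ?_, ?_, hjump, fun hPC => ?_⟩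
  · exact hEHs_ite ▸ hright.tendsto_ite_lt_nhdsGT
  · exact hEHs_ite ▸ hleft.tendsto_ite_lt_nhdsLT
  · rw [hjump, mul_div_cancel_right₀ _ hPC.ne']

/-- Proposition 3: In the three-type mixture model around the statutory retirement
age `m*`, with never-takers' CEF `f0`, always-takers' CEF `f1 + λ`, and compliers' CEF switching
from `f0` to `f1 + λ` at `m*`, where `f0, f1` are continuous at `m*` with common (one-sided)
limit `L`, the discontinuity of the population conditional expectation of reported health at `m*`
equals `λ·P^C`; consequently, if `P^C > 0`, then `λ` equals the discontinuity divided by `P^C`. -/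
theorem justification_bias_statutory_age_mixture
    (f0 f1 : ℝ → ℝ) (mstar L lam PN PA PC : ℝ)
    (hPN : 0 ≤ PN) (hPA : 0 ≤ PA) (hPC : 0 ≤ PC)
    (hsum : PN + PA + PC = 1)
    (hc0 : ContinuousAt f0 mstar) (hc1 : ContinuousAt f1 mstar)
    (h0 : f0 mstar = L) (h1 : f1 mstar = L)
    (EHs : ℝ → ℝ)
    (hEHs : ∀ x, EHs x =
      PN * f0 x + PA * (f1 x + lam) +
        PC * (if mstar < x then f1 x + lam else f0 x)) :
    ∃ A B : ℝ,
      Tendsto EHs (𝓝[>] mstar) (𝓝 A) ∧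
      Tendsto EHs (𝓝[<] mstar) (𝓝 B) ∧
      A - B = lam * PC ∧
      (0 < PC → lam = (A - B) / PC) :=
  justification_bias_statutory_age_mixture_general f0 f1 mstar L lam PN PA PC hc0 hc1 h0 h1 EHs hEHs
end

section
/- In the population regression of R on H^s, if Cov(e, ε) ≥ 0 (justification bias is nonnegative) and θ_H > 0, then the OLS estimand β satisfies β ≤ θ_H + Cov(e, ε)/Var(H^s); moreover β ≥ θ_H·Var(H)/Var(H^s) > 0, so the OLS estimand remains strictly positive despite measurement error. -/
/-!
By bilinearity of the covariance and the orthogonality assumptions,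
`Cov(R, H^s) = θ_H Var(H) + Cov(e, ε)` and `Var(H^s) = Var(H) + Var(ν) + Var(ε) ≥ Var(H) > 0`.
Both bounds on `β` are then elementary: the measurement noise only enlarges the denominator
(attenuation), while the nonnegative bias term only enlarges the numerator.
-/

open MeasureTheory

/-- Population covariance of two real random variables. -/
noncomputable def cov {Ω : Type*} [MeasurableSpace Ω] (μ : Measure Ω) (X Y : Ω → ℝ) : ℝ :=
  ∫ ω, (X ω - ∫ ω', X ω' ∂μ) * (Y ω - ∫ ω', Y ω' ∂μ) ∂μ

open ProbabilityTheory

lemma cov_eq_covariance {Ω : Type*} [MeasurableSpace Ω] (μ : Measure Ω) (X Y : Ω → ℝ) :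
    cov μ X Y = cov[X, Y; μ] :=
  rfl

lemma covariance_self_nonneg {Ω : Type*} [MeasurableSpace Ω] (X : Ω → ℝ) (μ : Measure Ω) :
    0 ≤ cov[X, X; μ] :=
  integral_nonneg fun _ ↦ mul_self_nonneg _

section ErrorsInVariables

variable {Ω : Type*} [MeasurableSpace Ω] {μ : Measure Ω} {H ν ε W : Ω → ℝ}

lemma covariance_add_add_right [IsFiniteMeasure μ]
    (hH : MemLp H 2 μ) (hν : MemLp ν 2 μ) (hε : MemLp ε 2 μ) (hW : MemLp W 2 μ) :
    cov[W, H + ν + ε; μ] = cov[W, H; μ] + cov[W, ν; μ] + cov[W, ε; μ] := by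
  rw [covariance_add_right hW (hH.add hν) hε, covariance_add_right hW hH hν]

lemma covariance_add_add_self_of_uncorrelated [IsFiniteMeasure μ]
    (hH : MemLp H 2 μ) (hν : MemLp ν 2 μ) (hε : MemLp ε 2 μ)
    (hHν : cov[H, ν; μ] = 0) (hHε : cov[H, ε; μ] = 0) (hνε : cov[ν, ε; μ] = 0) :
    cov[H + ν + ε, H + ν + ε; μ] = cov[H, H; μ] + cov[ν, ν; μ] + cov[ε, ε; μ] := by
  rw [covariance_add_left (hH.add hν) hε ((hH.add hν).add hε),
    covariance_add_left hH hν ((hH.add hν).add hε), covariance_add_add_right hH hν hε hH,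
    covariance_add_add_right hH hν hε hν, covariance_add_add_right hH hν hε hε,
    covariance_comm ν H, covariance_comm ε H, covariance_comm ε ν, hHν, hHε, hνε]
  ring

lemma covariance_affine_add_add_of_uncorrelated [IsProbabilityMeasure μ] {e : Ω → ℝ}
    (hH : MemLp H 2 μ) (hν : MemLp ν 2 μ) (hε : MemLp ε 2 μ) (he : MemLp e 2 μ)
    (hHν : cov[H, ν; μ] = 0) (hHε : cov[H, ε; μ] = 0)
    (heH : cov[e, H; μ] = 0) (heν : cov[e, ν; μ] = 0) (θ₀ θ : ℝ) :
    cov[fun ω ↦ θ₀ + θ * H ω + e ω, H + ν + ε; μ] = θ * cov[H, H; μ] + cov[e, ε; μ] := by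
  have hθH : MemLp (fun ω ↦ θ * H ω) 2 μ := hH.const_mul θ
  have hA : MemLp (fun ω ↦ θ₀ + θ * H ω) 2 μ := (memLp_const θ₀).add hθH
  change cov[(fun ω ↦ θ₀ + θ * H ω) + e, H + ν + ε; μ] = _
  rw [covariance_add_left hA he ((hH.add hν).add hε),
    covariance_const_add_left (hθH.integrable one_le_two), covariance_const_mul_left,
    covariance_add_add_right hH hν hε hH, covariance_add_add_right hH hν hε he,
    hHν, hHε, heH, heν]
  ring

end ErrorsInVariables

lemma attenuated_slope_bounds {θ v V c : ℝ} (hθ : 0 < θ) (hv : 0 < v) (hvV : v ≤ V)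
    (hc : 0 ≤ c) :
    (θ * v + c) / V ≤ θ + c / V ∧ θ * v / V ≤ (θ * v + c) / V ∧ 0 < θ * v / V ∧
      0 < (θ * v + c) / V := by
  have hV : 0 < V := hv.trans_le hvV
  have hθv : 0 < θ * v / V := by positivity
  refine ⟨?_, ?_, hθv, by positivity⟩
  · rw [add_div]
    gcongr
    rw [div_le_iff₀ hV]
    exact mul_le_mul_of_nonneg_left hvV hθ.le
  · gcongr
    linarith

/-- In the population regression of `R` on `H^s`, if `Cov(e,ε) ≥ 0` and `θH > 0`,
then the OLS estimand `β = Cov(R,H^s)/Var(H^s)` satisfies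
`β ≤ θH + Cov(e,ε)/Var(H^s)` and `β ≥ θH·Var(H)/Var(H^s) > 0`; in particular the OLS estimand
remains strictly positive despite measurement error. -/
theorem ols_bounds_with_nonnegative_bias
    {Ω : Type*} [MeasurableSpace Ω] (μ : Measure Ω) [IsProbabilityMeasure μ]
    (H ν ε e : Ω → ℝ) (θ0 θH : ℝ)
    (hH : MemLp H 2 μ) (hν : MemLp ν 2 μ) (hε : MemLp ε 2 μ) (he : MemLp e 2 μ)
    (R Hs : Ω → ℝ)
    (hR : ∀ ω, R ω = θ0 + θH * H ω + e ω)
    (hHs : ∀ ω, Hs ω = H ω + ν ω + ε ω)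
    (hHν : cov μ H ν = 0) (hHε : cov μ H ε = 0) (hνε : cov μ ν ε = 0)
    (heH : cov μ e H = 0) (heν : cov μ e ν = 0)
    (heε : 0 ≤ cov μ e ε)
    (hVarH : 0 < cov μ H H)
    (hθH : 0 < θH)
    (β : ℝ) (hβ : β = cov μ R Hs / cov μ Hs Hs) :
    β ≤ θH + cov μ e ε / cov μ Hs Hs ∧
    θH * cov μ H H / cov μ Hs Hs ≤ β ∧
    0 < θH * cov μ H H / cov μ Hs Hs ∧
    0 < β := by
  obtain rfl : R = fun ω ↦ θ0 + θH * H ω + e ω := funext hR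
  obtain rfl : Hs = H + ν + ε := funext hHs
  simp only [cov_eq_covariance] at *
  have hcovR := covariance_affine_add_add_of_uncorrelated hH hν hε he hHν hHε heH heν θ0 θH
  have hvarHs := covariance_add_add_self_of_uncorrelated hH hν hε hHν hHε hνε
  have hVarH_le : cov[H, H; μ] ≤ cov[H + ν + ε, H + ν + ε; μ] := by
    rw [hvarHs]
    linarith [covariance_self_nonneg ν μ, covariance_self_nonneg ε μ]
  rw [hβ, hcovR]
  exact attenuated_slope_bounds hθH hVarH hVarH_le heε
end
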